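/- Let G = G_1 ∘ G_2 with identified vertex v, and let S ⊆ V(G) with S_i = S ∩ V(G_i). Then the number of connected components satisfies: c_G(S) = c_{G_1}(S_1) + c_{G_2}(S_2) − 1 if v ∉ S, and c_G(S) = c_{G_1}(S_1) + c_{G_2}(S_2) − 2 if v ∈ S. -/

import Mathlib

open SimpleGraph Finset

/-- Number of connected components of the subgraph of `G` induced on the complement of `S`. -/
noncomputable def numComp {V : Type*} [Fintype V] (G : SimpleGraph V) (S : Finset V) : ℕ :=
  Nat.card (G.induce ((↑S : Set V)ᶜ)).ConnectedComponent

/-- `S` is a cut set of `G`. -/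
def IsCutSet {V : Type*} [Fintype V] [DecidableEq V] (G : SimpleGraph V) (S : Finset V) : Prop :=
  S = ∅ ∨ (S ≠ ∅ ∧ ∀ i ∈ S, numComp G (S.erase i) < numComp G S)

/-- The combinatorial condition equivalent to unmixedness of the binomial edge ideal. -/
def Unmixed {V : Type*} [Fintype V] [DecidableEq V] (G : SimpleGraph V) : Prop :=
  ∀ S : Finset V, IsCutSet G S → numComp G S = S.card + 1

/-- Vertex set of `(G₁,f₁) ∘ (G₂,f₂)`: the leaves `f₁, f₂` are removed and `v₁` is
identified with `v₂` (the copy of `v₂` is dropped, `v₁` playing the role of `v`). -/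
abbrev GlueV {V₁ V₂ : Type*} (f1 : V₁) (f2 v2 : V₂) : Type _ :=
  {x : V₁ // x ≠ f1} ⊕ {x : V₂ // x ≠ f2 ∧ x ≠ v2}

/-- The graph `(G₁,f₁) ∘ (G₂,f₂)`. -/
def glueGraph {V₁ V₂ : Type*} (Γ1 : SimpleGraph V₁) (Γ2 : SimpleGraph V₂)
    (f1 v1 : V₁) (f2 v2 : V₂) : SimpleGraph (GlueV f1 f2 v2) :=
  SimpleGraph.fromRel (fun x y =>
    match x, y with
    | Sum.inl a, Sum.inl b => Γ1.Adj a.1 b.1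
    | Sum.inr a, Sum.inr b => Γ2.Adj a.1 b.1
    | Sum.inl a, Sum.inr b => a.1 = v1 ∧ Γ2.Adj v2 b.1
    | Sum.inr a, Sum.inl b => b.1 = v1 ∧ Γ2.Adj v2 a.1)

/-- The subset of `V₁` corresponding to a set of vertices of the glued graph
(`S ∩ V(G₁)`, with `v` read as `v₁`). -/
def leftPart {V₁ V₂ : Type*} [DecidableEq V₁] {f1 : V₁} {f2 v2 : V₂}
    (S : Finset (GlueV f1 f2 v2)) : Finset V₁ :=
  S.biUnion (fun z => match z with
    | Sum.inl a => {a.1}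
    | Sum.inr _ => (∅ : Finset V₁))

/-- The subset of `V₂` corresponding to a set of vertices of the glued graph
(`S ∩ V(G₂)`, with `v` read as `v₂`). -/
def rightPart {V₁ V₂ : Type*} [DecidableEq V₁] [DecidableEq V₂] (v1 : V₁) {f1 : V₁}
    {f2 v2 : V₂} (S : Finset (GlueV f1 f2 v2)) : Finset V₂ :=
  S.biUnion (fun z => match z with
    | Sum.inl a => if a.1 = v1 then {v2} else (∅ : Finset V₂)
    | Sum.inr b => {b.1})

/-- The subset of the glued graph corresponding to a subset `S1 ⊆ V₁`. -/
def liftLeft {V₁ V₂ : Type*} [DecidableEq V₁] [DecidableEq V₂] {f1 : V₁} {f2 v2 : V₂}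
    (S1 : Finset V₁) : Finset (GlueV f1 f2 v2) :=
  S1.biUnion (fun a => if h : a ≠ f1 then {Sum.inl ⟨a, h⟩} else ∅)

/-- The subset of the glued graph corresponding to a subset `S2 ⊆ V₂`
(`v₂` being read as `v`, i.e. as `v₁`). -/
def liftRight {V₁ V₂ : Type*} [DecidableEq V₁] [DecidableEq V₂] {f1 v1 : V₁} {f2 v2 : V₂}
    (hne1 : v1 ≠ f1) (S2 : Finset V₂) : Finset (GlueV f1 f2 v2) :=
  S2.biUnion (fun b =>
    if h : b ≠ f2 ∧ b ≠ v2 then {Sum.inr ⟨b, h⟩}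
    else if b = v2 then {Sum.inl ⟨v1, hne1⟩} else ∅)

/-!
Write `H = G - S` and `Hᵢ = Gᵢ - Sᵢ`; vertex maps sending edges to reachable pairs induce maps
on connected components. The retraction `H → Hᵢ` is the identity on the `i`-th side and collapses
the other side onto the leaf `fᵢ`; it respects edges because `fᵢ ~ vᵢ` when `v ∉ S`, while no edge
of `H` crosses sides when `v ∈ S`.

If `v ∉ S`, the inclusions `Hᵢ → H` (sending `fᵢ` to `v`) induce injections on components whose
images cover all components of `H` and meet only in the component of `v`. If `v ∈ S`, each `fᵢ` is
isolated in `Hᵢ` and all other components of `H₁` and `H₂` are, disjointly, those of `H`; sending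
`{fᵢ}` to an extra point reduces this to the same counting lemma.
-/

namespace SimpleGraph

variable {V W : Type*} {G : SimpleGraph V} {H : SimpleGraph W}

theorem Reachable.eq_of_forall_adj {β : Sort*} {f : V → β} (hf : ∀ a b, G.Adj a b → f a = f b)
    {a b : V} (h : G.Reachable a b) : f a = f b := by
  obtain ⟨p⟩ := h
  induction p with
  | nil => rfl
  | cons hadj _ ih => exact (hf _ _ hadj).trans ih

abbrev deleteVerts (G : SimpleGraph V) (S : Finset V) : SimpleGraph ↥((↑S : Set V)ᶜ) :=
  G.induce (↑S)ᶜ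

namespace ConnectedComponent

def liftAdj {β : Sort*} (f : V → β) (hf : ∀ a b, G.Adj a b → f a = f b) :
    G.ConnectedComponent → β :=
  Quot.lift f fun _ _ => Reachable.eq_of_forall_adj hf

@[simp]
theorem liftAdj_mk {β : Sort*} {f : V → β} {hf : ∀ a b, G.Adj a b → f a = f b} (v : V) :
    liftAdj f hf (G.connectedComponentMk v) = f v :=
  rfl

def mapOfReachable (φ : V → W) (hφ : ∀ a b, G.Adj a b → H.Reachable (φ a) (φ b)) :
    G.ConnectedComponent → H.ConnectedComponent :=
  liftAdj (fun v => H.connectedComponentMk (φ v)) fun a b h => ConnectedComponent.sound (hφ a b h)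

@[simp]
theorem mapOfReachable_mk {φ : V → W} {hφ : ∀ a b, G.Adj a b → H.Reachable (φ a) (φ b)}
    (v : V) : mapOfReachable φ hφ (G.connectedComponentMk v) = H.connectedComponentMk (φ v) :=
  rfl

theorem leftInverse_mapOfReachable {φ : V → W} {ψ : W → V}
    {hφ : ∀ a b, G.Adj a b → H.Reachable (φ a) (φ b)}
    {hψ : ∀ a b, H.Adj a b → G.Reachable (ψ a) (ψ b)} (h : ∀ v, G.Reachable (ψ (φ v)) v) :
    Function.LeftInverse (mapOfReachable ψ hψ) (mapOfReachable φ hφ) :=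
  ConnectedComponent.ind fun v => ConnectedComponent.sound (h v)

end ConnectedComponent

end SimpleGraph

theorem Nat.card_add_one_eq_of_retract {α β γ : Type*} [Finite α] {f : β → α} {g : γ → α}
    {r : α → β} {b₀ : β} (hrf : Function.LeftInverse r f) (hg : Function.Injective g)
    (hrg : ∀ c, r (g c) = b₀) (hcover : ∀ a, a ∈ Set.range f ∨ a ∈ Set.range g)
    (hb₀ : f b₀ ∈ Set.range g) :
    Nat.card α + 1 = Nat.card β + Nat.card γ := by
  have hunion : Set.range f ∪ Set.range g = Set.univ := Set.eq_univ_of_forall hcover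
  have hinter : Set.range f ∩ Set.range g = {f b₀} := by
    refine Set.Subset.antisymm ?_ (Set.singleton_subset_iff.mpr ⟨⟨b₀, rfl⟩, hb₀⟩)
    rintro _ ⟨⟨b, rfl⟩, c, hc⟩
    rw [Set.mem_singleton_iff, ← hrf b, ← hc, hrg]
  have := Set.ncard_union_add_ncard_inter (Set.range f) (Set.range g)
  rwa [hunion, hinter, Set.ncard_univ, Set.ncard_singleton,
    Set.ncard_range_of_injective hrf.injective, Set.ncard_range_of_injective hg] at this

section GlueGraph

open ConnectedComponent

variable {V₁ V₂ : Type*} {Γ1 : SimpleGraph V₁} {Γ2 : SimpleGraph V₂} {f1 v1 : V₁} {f2 v2 : V₂}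

@[simp]
theorem glueGraph_adj_inl_inl {a b : {x : V₁ // x ≠ f1}} :
    (glueGraph Γ1 Γ2 f1 v1 f2 v2).Adj (.inl a) (.inl b) ↔ Γ1.Adj a b := by
  simp only [glueGraph, fromRel_adj, ne_eq, Sum.inl.injEq]
  exact ⟨fun h => h.2.elim id Adj.symm, fun h => ⟨fun hab => h.ne (congrArg _ hab), .inl h⟩⟩

@[simp]
theorem glueGraph_adj_inr_inr {a b : {x : V₂ // x ≠ f2 ∧ x ≠ v2}} :
    (glueGraph Γ1 Γ2 f1 v1 f2 v2).Adj (.inr a) (.inr b) ↔ Γ2.Adj a b := by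
  simp only [glueGraph, fromRel_adj, ne_eq, Sum.inr.injEq]
  exact ⟨fun h => h.2.elim id Adj.symm, fun h => ⟨fun hab => h.ne (congrArg _ hab), .inl h⟩⟩

@[simp]
theorem glueGraph_adj_inl_inr {a : {x : V₁ // x ≠ f1}} {b : {x : V₂ // x ≠ f2 ∧ x ≠ v2}} :
    (glueGraph Γ1 Γ2 f1 v1 f2 v2).Adj (.inl a) (.inr b) ↔ a.1 = v1 ∧ Γ2.Adj v2 b := by
  simp [glueGraph]

@[simp]
theorem glueGraph_adj_inr_inl {a : {x : V₁ // x ≠ f1}} {b : {x : V₂ // x ≠ f2 ∧ x ≠ v2}} :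
    (glueGraph Γ1 Γ2 f1 v1 f2 v2).Adj (.inr b) (.inl a) ↔ a.1 = v1 ∧ Γ2.Adj v2 b := by
  simp [glueGraph]

variable [DecidableEq V₁] (S : Finset (GlueV f1 f2 v2)) {hne1 : v1 ≠ f1}

@[simp]
theorem val_mem_leftPart (a : {x : V₁ // x ≠ f1}) : a.1 ∈ leftPart S ↔ .inl a ∈ S := by
  simp [leftPart, a.2]

theorem f1_notMem_leftPart : f1 ∉ leftPart S := by
  simp [leftPart]

def glueToLeft : ↥((↑S : Set (GlueV f1 f2 v2))ᶜ) → ↥((↑(leftPart S) : Set V₁)ᶜ)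
  | ⟨.inl a, h⟩ => ⟨a, by simpa using h⟩
  | ⟨.inr _, _⟩ => ⟨f1, f1_notMem_leftPart S⟩

theorem glueToLeft_reachable_of_adj (ha1 : Γ1.Adj f1 v1) (x y : ↥((↑S : Set (GlueV f1 f2 v2))ᶜ))
    (hxy : ((glueGraph Γ1 Γ2 f1 v1 f2 v2).deleteVerts S).Adj x y) :
    (Γ1.deleteVerts (leftPart S)).Reachable (glueToLeft S x) (glueToLeft S y) := by
  obtain ⟨a | b, hx⟩ := x <;> obtain ⟨a' | b', hy⟩ := y <;>
    simp only [deleteVerts, comap_adj, Function.Embedding.subtype_apply, glueGraph_adj_inl_inl,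
      glueGraph_adj_inl_inr, glueGraph_adj_inr_inl, glueGraph_adj_inr_inr] at hxy
  · exact Adj.reachable (by simpa [glueToLeft] using hxy)
  · exact Adj.reachable (by simpa [glueToLeft, hxy.1] using ha1.symm)
  · exact Adj.reachable (by simpa [glueToLeft, hxy.1] using ha1)
  · rfl

def glueOfLeft (hv : .inl ⟨v1, hne1⟩ ∉ S) :
    ↥((↑(leftPart S) : Set V₁)ᶜ) → ↥((↑S : Set (GlueV f1 f2 v2))ᶜ) := fun x =>
  if h : x.1 = f1 then ⟨.inl ⟨v1, hne1⟩, hv⟩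
  else ⟨.inl ⟨x, h⟩, (val_mem_leftPart S ⟨x, h⟩).not.mp x.2⟩

theorem glueOfLeft_reachable_of_adj (hv : .inl ⟨v1, hne1⟩ ∉ S)
    (hf1 : ∀ w, Γ1.Adj f1 w → w = v1)
    (x y : ↥((↑(leftPart S) : Set V₁)ᶜ)) (hxy : (Γ1.deleteVerts (leftPart S)).Adj x y) :
    ((glueGraph Γ1 Γ2 f1 v1 f2 v2).deleteVerts S).Reachable
      (glueOfLeft S hv x) (glueOfLeft S hv y) := by
  have collapse (x y : ↥((↑(leftPart S) : Set V₁)ᶜ)) (hxy : Γ1.Adj x y) (hx : x.1 = f1) :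
      glueOfLeft S hv x = glueOfLeft S hv y := by
    have hy : y.1 = v1 := hf1 _ (by rwa [hx] at hxy)
    simp [glueOfLeft, hx, hy, hne1]
  by_cases hx : x.1 = f1
  · rw [collapse x y hxy hx]
  by_cases hy : y.1 = f1
  · rw [collapse y x hxy.symm hy]
  exact Adj.reachable (by simpa [glueOfLeft, hx, hy] using hxy)

def glueOfLeftOption (x : ↥((↑(leftPart S) : Set V₁)ᶜ)) :
    Option ↥((↑S : Set (GlueV f1 f2 v2))ᶜ) :=
  if h : x.1 = f1 then none
  else some ⟨.inl ⟨x, h⟩, (val_mem_leftPart S ⟨x, h⟩).not.mp x.2⟩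

def glueComponentOfLeft (hv : .inl ⟨v1, hne1⟩ ∈ S) (hf1 : ∀ w, Γ1.Adj f1 w → w = v1) :
    (Γ1.deleteVerts (leftPart S)).ConnectedComponent →
      Option ((glueGraph Γ1 Γ2 f1 v1 f2 v2).deleteVerts S).ConnectedComponent :=
  liftAdj (fun x => (glueOfLeftOption S x).map (connectedComponentMk _)) fun x y hxy => by
    have isolated (x y : ↥((↑(leftPart S) : Set V₁)ᶜ)) (hxy : Γ1.Adj x y) : x.1 ≠ f1 := by
      intro hx
      have hy : y.1 = v1 := hf1 _ (by rwa [hx] at hxy)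
      exact y.2 (hy ▸ (val_mem_leftPart S ⟨v1, hne1⟩).mpr hv)
    have hx := isolated x y hxy
    have hy := isolated y x hxy.symm
    simpa [glueOfLeftOption, hx, hy] using
      Adj.reachable (G := (glueGraph Γ1 Γ2 f1 v1 f2 v2).deleteVerts S) (by simpa using hxy)

variable [DecidableEq V₂]

@[simp]
theorem val_mem_rightPart (b : {x : V₂ // x ≠ f2 ∧ x ≠ v2}) :
    b.1 ∈ rightPart v1 S ↔ .inr b ∈ S := by
  simp [rightPart, mem_ite, b.2]

theorem v2_mem_rightPart (hne1 : v1 ≠ f1) : v2 ∈ rightPart v1 S ↔ .inl ⟨v1, hne1⟩ ∈ S := by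
  simp [rightPart, mem_ite, hne1]

theorem f2_notMem_rightPart (hne2 : f2 ≠ v2) : f2 ∉ rightPart v1 S := by
  simp [rightPart, mem_ite, hne2]

def glueToRight (v1 : V₁) (hne2 : f2 ≠ v2) :
    ↥((↑S : Set (GlueV f1 f2 v2))ᶜ) → ↥((↑(rightPart v1 S) : Set V₂)ᶜ)
  | ⟨.inl _, _⟩ => ⟨f2, f2_notMem_rightPart S hne2⟩
  | ⟨.inr b, h⟩ => ⟨b, by simpa using h⟩

theorem glueToRight_reachable_of_adj (hne1 : v1 ≠ f1) (ha2 : Γ2.Adj f2 v2)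
    (x y : ↥((↑S : Set (GlueV f1 f2 v2))ᶜ))
    (hxy : ((glueGraph Γ1 Γ2 f1 v1 f2 v2).deleteVerts S).Adj x y) :
    (Γ2.deleteVerts (rightPart v1 S)).Reachable
      (glueToRight S v1 ha2.ne x) (glueToRight S v1 ha2.ne y) := by
  have cross (a : {x : V₁ // x ≠ f1}) (ha : Sum.inl a ∉ S) (b : {x : V₂ // x ≠ f2 ∧ x ≠ v2})
      (hb : Sum.inr b ∉ S) (hab : a.1 = v1 ∧ Γ2.Adj v2 b) :
      (Γ2.deleteVerts (rightPart v1 S)).Reachable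
        ⟨f2, f2_notMem_rightPart S ha2.ne⟩ ⟨b, by simpa using hb⟩ := by
    obtain rfl : a = ⟨v1, hne1⟩ := Subtype.ext hab.1
    have hv2 : v2 ∉ rightPart v1 S := by rwa [v2_mem_rightPart S hne1]
    exact (Adj.reachable (v := ⟨v2, hv2⟩) (by simpa using ha2)).trans
      (Adj.reachable (by simpa using hab.2))
  obtain ⟨a | b, hx⟩ := x <;> obtain ⟨a' | b', hy⟩ := y <;>
    simp only [deleteVerts, comap_adj, Function.Embedding.subtype_apply, glueGraph_adj_inl_inl,
      glueGraph_adj_inl_inr, glueGraph_adj_inr_inl, glueGraph_adj_inr_inr] at hxy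
  · rfl
  · exact cross a hx b' hy hxy
  · exact (cross a' hy b hx hxy).symm
  · exact Adj.reachable (by simpa [glueToRight] using hxy)

def glueOfRight (hv : .inl ⟨v1, hne1⟩ ∉ S) :
    ↥((↑(rightPart v1 S) : Set V₂)ᶜ) → ↥((↑S : Set (GlueV f1 f2 v2))ᶜ) := fun y =>
  if h : y.1 = f2 ∨ y.1 = v2 then ⟨.inl ⟨v1, hne1⟩, hv⟩
  else ⟨.inr ⟨y, not_or.mp h⟩, (val_mem_rightPart S ⟨y, not_or.mp h⟩).not.mp y.2⟩

theorem glueOfRight_reachable_of_adj (hv : .inl ⟨v1, hne1⟩ ∉ S)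
    (hf2 : ∀ w, Γ2.Adj f2 w → w = v2) (x y : ↥((↑(rightPart v1 S) : Set V₂)ᶜ))
    (hxy : (Γ2.deleteVerts (rightPart v1 S)).Adj x y) :
    ((glueGraph Γ1 Γ2 f1 v1 f2 v2).deleteVerts S).Reachable
      (glueOfRight S hv x) (glueOfRight S hv y) := by
  have attach (x y : ↥((↑(rightPart v1 S) : Set V₂)ᶜ)) (hxy : Γ2.Adj x y)
      (hx : x.1 = f2 ∨ x.1 = v2) (hy : ¬(y.1 = f2 ∨ y.1 = v2)) :
      ((glueGraph Γ1 Γ2 f1 v1 f2 v2).deleteVerts S).Adj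
        (glueOfRight S hv x) (glueOfRight S hv y) := by
    have hx2 : x.1 = v2 := hx.resolve_left fun hx1 => hy (.inr (hf2 _ (by rwa [hx1] at hxy)))
    rw [hx2] at hxy
    simpa [glueOfRight, hx, hy] using hxy
  by_cases hx : x.1 = f2 ∨ x.1 = v2 <;> by_cases hy : y.1 = f2 ∨ y.1 = v2
  · simp [glueOfRight, hx, hy]
  · exact (attach x y hxy hx hy).reachable
  · exact (attach y x hxy.symm hy hx).reachable.symm
  · exact Adj.reachable (by simpa [glueOfRight, hx, hy] using hxy)

def glueOfRightOption (hv : .inl ⟨v1, hne1⟩ ∈ S) (y : ↥((↑(rightPart v1 S) : Set V₂)ᶜ)) :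
    Option ↥((↑S : Set (GlueV f1 f2 v2))ᶜ) :=
  if h : y.1 = f2 then none
  else
    have hv2 : y.1 ≠ v2 := fun hy => y.2 (by simpa [hy] using (v2_mem_rightPart S hne1).mpr hv)
    some ⟨.inr ⟨y, h, hv2⟩, (val_mem_rightPart S ⟨y, h, hv2⟩).not.mp y.2⟩

def glueComponentOfRight (hv : .inl ⟨v1, hne1⟩ ∈ S) (hf2 : ∀ w, Γ2.Adj f2 w → w = v2) :
    (Γ2.deleteVerts (rightPart v1 S)).ConnectedComponent →
      Option ((glueGraph Γ1 Γ2 f1 v1 f2 v2).deleteVerts S).ConnectedComponent :=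
  liftAdj (fun y => (glueOfRightOption S hv y).map (connectedComponentMk _)) fun x y hxy => by
    have isolated (x y : ↥((↑(rightPart v1 S) : Set V₂)ᶜ)) (hxy : Γ2.Adj x y) : x.1 ≠ f2 := by
      intro hx
      have hy : y.1 = v2 := hf2 _ (by rwa [hx] at hxy)
      exact y.2 (by simpa [hy] using (v2_mem_rightPart S hne1).mpr hv)
    have hx := isolated x y hxy
    have hy := isolated y x hxy.symm
    simpa [glueOfRightOption, hx, hy] using
      Adj.reachable (G := (glueGraph Γ1 Γ2 f1 v1 f2 v2).deleteVerts S) (by simpa using hxy)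

theorem glueComponent_cover (hv : .inl ⟨v1, hne1⟩ ∈ S) (hf1 : ∀ w, Γ1.Adj f1 w → w = v1)
    (hf2 : ∀ w, Γ2.Adj f2 w → w = v2)
    (o : Option ((glueGraph Γ1 Γ2 f1 v1 f2 v2).deleteVerts S).ConnectedComponent) :
    o ∈ Set.range (glueComponentOfLeft S hv hf1) ∨
      o ∈ Set.range (glueComponentOfRight S hv hf2) := by
  rcases o with _ | c
  · exact .inl ⟨connectedComponentMk _ ⟨f1, f1_notMem_leftPart S⟩,
      by simp [glueComponentOfLeft, glueOfLeftOption]⟩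
  induction c using ConnectedComponent.ind with | h z => ?_
  obtain ⟨a | b, hz⟩ := z
  · exact .inl ⟨connectedComponentMk _ ⟨a, by simpa using hz⟩,
      by simp [glueComponentOfLeft, glueOfLeftOption, a.2]⟩
  · exact .inr ⟨connectedComponentMk _ ⟨b, by simpa using hz⟩,
      by simp [glueComponentOfRight, glueOfRightOption, b.2]⟩

variable [Fintype V₁] [Fintype V₂]

theorem numComp_glueGraph_add_one (ha1 : Γ1.Adj f1 v1) (ha2 : Γ2.Adj f2 v2)
    (hf1 : ∀ w, Γ1.Adj f1 w → w = v1) (hf2 : ∀ w, Γ2.Adj f2 w → w = v2)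
    (hv : .inl ⟨v1, hne1⟩ ∉ S) :
    numComp (glueGraph Γ1 Γ2 f1 v1 f2 v2) S + 1 =
      numComp Γ1 (leftPart S) + numComp Γ2 (rightPart v1 S) := by
  have hf1' : f1 ∉ leftPart S := f1_notMem_leftPart S
  have hf2' : f2 ∉ rightPart v1 S := f2_notMem_rightPart S ha2.ne
  refine Nat.card_add_one_eq_of_retract
    (f := mapOfReachable (glueOfLeft S hv) (glueOfLeft_reachable_of_adj S hv hf1))
    (g := mapOfReachable (glueOfRight S hv) (glueOfRight_reachable_of_adj S hv hf2))
    (r := mapOfReachable (glueToLeft S) (glueToLeft_reachable_of_adj S ha1))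
    (b₀ := connectedComponentMk _ ⟨f1, hf1'⟩) ?_ ?_ ?_ ?_ ?_
  · refine leftInverse_mapOfReachable fun x => ?_
    by_cases hx : x.1 = f1
    · exact Adj.reachable (by simpa [glueOfLeft, glueToLeft, hx] using ha1.symm)
    · simp [glueOfLeft, glueToLeft, hx]
  · refine (leftInverse_mapOfReachable (ψ := glueToRight S v1 ha2.ne)
      (hψ := glueToRight_reachable_of_adj S hne1 ha2) fun y => ?_).injective
    by_cases hy : y.1 = f2 ∨ y.1 = v2
    · rcases hy with hy | hy
      · rw [show y = ⟨f2, hf2'⟩ from Subtype.ext hy]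
        simp [glueOfRight, glueToRight]
      · exact Adj.reachable (by simpa [glueOfRight, glueToRight, hy] using ha2)
    · simp [glueOfRight, glueToRight, hy]
  · refine ConnectedComponent.ind fun y => ConnectedComponent.sound ?_
    by_cases hy : y.1 = f2 ∨ y.1 = v2
    · exact Adj.reachable (by simpa [glueOfRight, glueToLeft, hy] using ha1.symm)
    · simp [glueOfRight, glueToLeft, hy]
  · refine ConnectedComponent.ind fun ⟨z, hz⟩ => ?_
    rcases z with a | b
    · exact .inl ⟨connectedComponentMk _ ⟨a, by simpa using hz⟩, by simp [glueOfLeft, a.2]⟩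
    · exact .inr ⟨connectedComponentMk _ ⟨b, by simpa using hz⟩, by simp [glueOfRight, b.2]⟩
  · exact ⟨connectedComponentMk _ ⟨f2, hf2'⟩, by simp [glueOfLeft, glueOfRight]⟩

theorem numComp_glueGraph_add_two (ha1 : Γ1.Adj f1 v1) (ha2 : Γ2.Adj f2 v2)
    (hf1 : ∀ w, Γ1.Adj f1 w → w = v1) (hf2 : ∀ w, Γ2.Adj f2 w → w = v2)
    (hv : .inl ⟨v1, hne1⟩ ∈ S) :
    numComp (glueGraph Γ1 Γ2 f1 v1 f2 v2) S + 2 =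
      numComp Γ1 (leftPart S) + numComp Γ2 (rightPart v1 S) := by
  have hf1' : f1 ∉ leftPart S := f1_notMem_leftPart S
  have hf2' : f2 ∉ rightPart v1 S := f2_notMem_rightPart S ha2.ne
  have := Nat.card_add_one_eq_of_retract
    (f := glueComponentOfLeft S hv hf1) (g := glueComponentOfRight S hv hf2)
    (r := fun o => o.elim (connectedComponentMk _ ⟨f1, hf1'⟩)
      (mapOfReachable (glueToLeft S) (glueToLeft_reachable_of_adj S ha1)))
    (b₀ := connectedComponentMk _ ⟨f1, hf1'⟩) ?_ ?_ ?_ ?_ ?_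
  · rwa [Finite.card_option] at this
  · refine ConnectedComponent.ind fun x => ?_
    by_cases hx : x.1 = f1
    · rw [show x = ⟨f1, hf1'⟩ from Subtype.ext hx]
      simp [glueComponentOfLeft, glueOfLeftOption]
    · simp [glueComponentOfLeft, glueOfLeftOption, glueToLeft, hx]
  · refine Function.LeftInverse.injective
      (g := fun o => o.elim (connectedComponentMk _ ⟨f2, hf2'⟩)
        (mapOfReachable (glueToRight S v1 ha2.ne) (glueToRight_reachable_of_adj S hne1 ha2))) ?_
    refine ConnectedComponent.ind fun y => ?_
    by_cases hy : y.1 = f2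
    · rw [show y = ⟨f2, hf2'⟩ from Subtype.ext hy]
      simp [glueComponentOfRight, glueOfRightOption]
    · simp [glueComponentOfRight, glueOfRightOption, glueToRight, hy]
  · refine ConnectedComponent.ind fun y => ?_
    by_cases hy : y.1 = f2
    · simp [glueComponentOfRight, glueOfRightOption, hy]
    · simp [glueComponentOfRight, glueOfRightOption, glueToLeft, hy]
  · exact glueComponent_cover S hv hf1 hf2
  · exact ⟨connectedComponentMk _ ⟨f2, hf2'⟩, by
      simp [glueComponentOfLeft, glueOfLeftOption, glueComponentOfRight, glueOfRightOption]⟩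

end GlueGraph

theorem stmt13_general {V₁ V₂ : Type*} [Fintype V₁] [DecidableEq V₁] [Fintype V₂] [DecidableEq V₂]
    (Γ1 : SimpleGraph V₁) (Γ2 : SimpleGraph V₂)
    [DecidableRel Γ1.Adj] [DecidableRel Γ2.Adj]
    (f1 v1 : V₁) (f2 v2 : V₂)
    (hl1 : Γ1.degree f1 = 1) (hl2 : Γ2.degree f2 = 1)
    (ha1 : Γ1.Adj f1 v1) (ha2 : Γ2.Adj f2 v2)
    (hne1 : v1 ≠ f1) :
    ∀ S : Finset (GlueV f1 f2 v2),
      ((Sum.inl ⟨v1, hne1⟩ : GlueV f1 f2 v2) ∉ S →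
        numComp (glueGraph Γ1 Γ2 f1 v1 f2 v2) S =
          numComp Γ1 (leftPart S) + numComp Γ2 (rightPart v1 S) - 1) ∧
      ((Sum.inl ⟨v1, hne1⟩ : GlueV f1 f2 v2) ∈ S →
        numComp (glueGraph Γ1 Γ2 f1 v1 f2 v2) S =
          numComp Γ1 (leftPart S) + numComp Γ2 (rightPart v1 S) - 2) := by
  have hf1 : ∀ w, Γ1.Adj f1 w → w = v1 := fun _ hw =>
    (degree_eq_one_iff_existsUnique_adj.mp hl1).unique hw ha1
  have hf2 : ∀ w, Γ2.Adj f2 w → w = v2 := fun _ hw =>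
    (degree_eq_one_iff_existsUnique_adj.mp hl2).unique hw ha2
  intro S
  refine ⟨fun hv => ?_, fun hv => ?_⟩
  · have := numComp_glueGraph_add_one S ha1 ha2 hf1 hf2 hv
    omega
  · have := numComp_glueGraph_add_two S ha1 ha2 hf1 hf2 hv
    omega

theorem stmt13 {V₁ V₂ : Type*} [Fintype V₁] [DecidableEq V₁] [Fintype V₂] [DecidableEq V₂]
    (Γ1 : SimpleGraph V₁) (Γ2 : SimpleGraph V₂)
    [DecidableRel Γ1.Adj] [DecidableRel Γ2.Adj]
    (hconn1 : Γ1.Connected) (hconn2 : Γ2.Connected)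
    (f1 v1 : V₁) (f2 v2 : V₂)
    (hl1 : Γ1.degree f1 = 1) (hl2 : Γ2.degree f2 = 1)
    (ha1 : Γ1.Adj f1 v1) (ha2 : Γ2.Adj f2 v2)
    (hd1 : 3 ≤ Γ1.degree v1) (hd2 : 3 ≤ Γ2.degree v2)
    (hne1 : v1 ≠ f1) (hne2 : v2 ≠ f2) :
    ∀ S : Finset (GlueV f1 f2 v2),
      ((Sum.inl ⟨v1, hne1⟩ : GlueV f1 f2 v2) ∉ S →
        numComp (glueGraph Γ1 Γ2 f1 v1 f2 v2) S =
          numComp Γ1 (leftPart S) + numComp Γ2 (rightPart v1 S) - 1) ∧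
      ((Sum.inl ⟨v1, hne1⟩ : GlueV f1 f2 v2) ∈ S →
        numComp (glueGraph Γ1 Γ2 f1 v1 f2 v2) S =
          numComp Γ1 (leftPart S) + numComp Γ2 (rightPart v1 S) - 2) :=
  stmt13_general Γ1 Γ2 f1 v1 f2 v2 hl1 hl2 ha1 ha2 hne1
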